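/- arXiv:1211.4230 — 6 statements merged into one kernel-verified Lean document; each statement's English description precedes it below -/
import Mathlib

section
/- Let f be a nonzero element of R. The localization map R → R_f induces a K-algebra homomorphism R^𝐝 → (R_f)^𝐝 sending g_i to (g/1)_i for all g ∈ R and all multi-indices i with |i| ≥ 1, and hence an R_f-algebra homomorphism ψ_f : (R^𝐝)_f → (R_f)^𝐝 from the localization of R^𝐝 at the image of f under the structure map R → R^𝐝. Then ψ_f is an isomorphism (i.e. bijective). -/
/-!
Ring maps `R^𝐝 → A` are the same as ring maps `R → A[[t]]` under which elements of `K`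
have no higher Taylor coefficients. Composing `I` with the localization map
`R^𝐝 → (R^𝐝)_f` gives such a map `R → (R^𝐝)_f[[t]]`; it sends `f` to a series with
invertible constant term, so it extends to `R_f`, and the universal property of `(R_f)^𝐝`
turns it into an inverse of `ψ_f`: both composites fix the generators `g_i`.
-/

namespace Paper

/-- Multi-indices: finitely supported functions `Fin d → ℕ`. -/
abbrev MIdx (d : ℕ) := Fin d →₀ ℕ

/-- The length `|i|` of a multi-index. -/
def deg {d : ℕ} (i : MIdx d) : ℕ := i.sum fun _ n => n

variable (K R : Type) [Field K] [CharZero K] [CommRing R] [Algebra K R]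

/-- The defining relations of the algebra `R^𝐝`. -/
def relSet (d : ℕ) : Set (MvPolynomial (R × MIdx d) R) :=
  {p | (∃ f g : R, ∃ i : MIdx d,
          p = MvPolynomial.X (f + g, i) - MvPolynomial.X (f, i) - MvPolynomial.X (g, i)) ∨
       (∃ f g : R, ∃ i : MIdx d,
          p = MvPolynomial.X (f * g, i) -
            ∑ q ∈ Finset.HasAntidiagonal.antidiagonal i, MvPolynomial.X (f, q.1) * MvPolynomial.X (g, q.2)) ∨
       (∃ f : R, p = MvPolynomial.X (f, (0 : MIdx d)) - MvPolynomial.C f) ∨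
       (∃ (c : K) (i : MIdx d), 1 ≤ deg i ∧ p = MvPolynomial.X (algebraMap K R c, i))}

/-- The commutative `R`-algebra `R^𝐝` generated by the symbols `f_i`. -/
def Rd (d : ℕ) : Type :=
  MvPolynomial (R × MIdx d) R ⧸ Ideal.span (relSet K R d)

noncomputable instance (d : ℕ) : CommRing (Rd K R d) := Ideal.Quotient.commRing _
noncomputable instance (d : ℕ) : Algebra R (Rd K R d) := Ideal.Quotient.algebra R
noncomputable instance (d : ℕ) : Algebra K (Rd K R d) := Ideal.Quotient.algebra K

/-- The generator `f_i` of `R^𝐝`. -/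
noncomputable def gen {d : ℕ} (f : R) (i : MIdx d) : Rd K R d :=
  Ideal.Quotient.mk (Ideal.span (relSet K R d)) (MvPolynomial.X (f, i))

/-- The Taylor series `I(f) = Σ_i f_i t^i ∈ R^𝐝[[t^1,…,t^d]]`. -/
noncomputable def Ifun {d : ℕ} (f : R) : MvPowerSeries (Fin d) (Rd K R d) :=
  fun i => gen K R f i

end Paper

namespace Paper

variable {K R : Type} [Field K] [CommRing R] [Algebra K R] {d : ℕ}

namespace Rd

-- `Ideal.Quotient.mk` with codomain `Rd K R d`, so that rewriting with `map_sub` etc. does not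
-- leave the (non-reducible) type `Rd K R d`.
variable (K R d) in
noncomputable abbrev mk : MvPolynomial (R × MIdx d) R →+* Rd K R d := Ideal.Quotient.mk _

lemma mk_eq_zero_of_mem_relSet {p : MvPolynomial (R × MIdx d) R} (hp : p ∈ relSet K R d) :
    mk K R d p = 0 :=
  Ideal.Quotient.eq_zero_iff_mem.2 (Ideal.subset_span hp)

end Rd

lemma gen_add (f g : R) (i : MIdx d) :
    gen K R (f + g) i = gen K R f i + gen K R g i := by
  have h := Rd.mk_eq_zero_of_mem_relSet (K := K) (Or.inl ⟨f, g, i, rfl⟩)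
  rwa [map_sub, map_sub, sub_sub, sub_eq_zero] at h

lemma gen_mul (f g : R) (i : MIdx d) :
    gen K R (f * g) i =
      ∑ q ∈ Finset.HasAntidiagonal.antidiagonal i, gen K R f q.1 * gen K R g q.2 := by
  have h := Rd.mk_eq_zero_of_mem_relSet (K := K) (Or.inr (Or.inl ⟨f, g, i, rfl⟩))
  simp only [map_sub, map_sum, map_mul, sub_eq_zero] at h
  exact h

lemma gen_zero_index (f : R) : gen K R f (0 : MIdx d) = algebraMap R (Rd K R d) f := by
  have h := Rd.mk_eq_zero_of_mem_relSet (K := K) (d := d) (Or.inr (Or.inr (Or.inl ⟨f, rfl⟩)))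
  rwa [map_sub, sub_eq_zero] at h

lemma gen_algebraMap_of_ne_zero (c : K) {i : MIdx d} (hi : i ≠ 0) :
    gen K R (algebraMap K R c) i = 0 :=
  Rd.mk_eq_zero_of_mem_relSet <| Or.inr <| Or.inr <| Or.inr
    ⟨c, i, Nat.one_le_iff_ne_zero.2 ((Finsupp.degree_eq_zero_iff i).not.2 hi), rfl⟩

variable (K R d) in
noncomputable def IHom : R →+* MvPowerSeries (Fin d) (Rd K R d) :=
  RingHom.mk'
    { toFun := Ifun K R
      map_one' := MvPowerSeries.ext fun i => by
        show gen K R 1 i = MvPowerSeries.coeff i 1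
        rw [MvPowerSeries.coeff_one]
        split_ifs with hi
        · rw [hi, gen_zero_index, map_one]
        · rw [← map_one (algebraMap K R)]; exact gen_algebraMap_of_ne_zero 1 hi
      map_mul' := fun f g => MvPowerSeries.ext fun i => by
        rw [MvPowerSeries.coeff_mul]; exact gen_mul f g i }
    fun f g => MvPowerSeries.ext fun i => gen_add f g i

lemma coeff_IHom (f : R) (i : MIdx d) : MvPowerSeries.coeff i (IHom K R d f) = gen K R f i := rfl

lemma constantCoeff_IHom (f : R) :
    MvPowerSeries.constantCoeff (IHom K R d f) = algebraMap R (Rd K R d) f := by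
  rw [← MvPowerSeries.coeff_zero_eq_constantCoeff_apply, coeff_IHom, gen_zero_index]

namespace Rd

section Lift

variable {A : Type*} [CommRing A] (Φ : R →+* MvPowerSeries (Fin d) A)
  (hΦ : ∀ (c : K) (i : MIdx d), i ≠ 0 → MvPowerSeries.coeff i (Φ (algebraMap K R c)) = 0)

include hΦ in
lemma span_relSet_le_ker :
    Ideal.span (relSet K R d) ≤ RingHom.ker (MvPolynomial.eval₂Hom
      (MvPowerSeries.constantCoeff.comp Φ) fun p => MvPowerSeries.coeff p.2 (Φ p.1)) := by
  refine Ideal.span_le.2 ?_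
  rintro p (⟨f, g, i, rfl⟩ | ⟨f, g, i, rfl⟩ | ⟨f, rfl⟩ | ⟨c, i, hi, rfl⟩) <;>
    simp only [SetLike.mem_coe, RingHom.mem_ker, map_sub, map_sum, MvPolynomial.eval₂Hom_X']
  · rw [map_add, map_add, sub_sub, sub_self]
  · simp only [map_mul, MvPolynomial.eval₂Hom_X', MvPowerSeries.coeff_mul, sub_self]
  · rw [MvPolynomial.eval₂Hom_C, RingHom.comp_apply,
      MvPowerSeries.coeff_zero_eq_constantCoeff_apply, sub_self]
  · exact hΦ c i fun h => by simp [h, deg] at hi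

noncomputable def lift : Rd K R d →+* A :=
  Ideal.Quotient.lift _ _ fun _ ha => span_relSet_le_ker Φ hΦ ha

lemma lift_gen (g : R) (i : MIdx d) :
    lift Φ hΦ (gen K R g i) = MvPowerSeries.coeff i (Φ g) :=
  (Ideal.Quotient.lift_mk _ _ _).trans (MvPolynomial.eval₂Hom_X' _ _ _)

end Lift

lemma hom_ext {A : Type*} [Semiring A] {F G : Rd K R d →+* A}
    (h : ∀ (g : R) (i : MIdx d), F (gen K R g i) = G (gen K R g i)) : F = G :=
  Ideal.Quotient.ringHom_ext <| MvPolynomial.ringHom_ext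
    (fun r => by have := h r 0; rwa [gen_zero_index] at this) fun p => h p.1 p.2

section Map

variable {R' : Type} [CommRing R'] [Algebra K R'] (φ : R →ₐ[K] R')

noncomputable def map : Rd K R d →+* Rd K R' d :=
  lift ((IHom K R' d).comp φ.toRingHom) fun c i hi => by
    rw [RingHom.comp_apply, AlgHom.toRingHom_eq_coe, RingHom.coe_coe, AlgHom.commutes,
      coeff_IHom, gen_algebraMap_of_ne_zero c hi]

lemma map_gen (g : R) (i : MIdx d) : map φ (gen K R g i) = gen K R' (φ g) i :=
  lift_gen _ _ g i

lemma map_algebraMap (g : R) :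
    map (d := d) φ (algebraMap R (Rd K R d) g) = algebraMap R' (Rd K R' d) (φ g) := by
  rw [← gen_zero_index, ← gen_zero_index, map_gen]

end Map

end Rd

section Away

variable (K d) (f : R)

lemma away_hom_ext {A : Type*} [Semiring A]
    {F G : Localization.Away (algebraMap R (Rd K R d) f) →+* A}
    (h : ∀ (g : R) (i : MIdx d),
      F (algebraMap _ _ (gen K R g i)) = G (algebraMap _ _ (gen K R g i))) :
    F = G :=
  IsLocalization.ringHom_ext (Submonoid.powers (algebraMap R (Rd K R d) f)) (Rd.hom_ext h)

noncomputable def awayHom :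
    Localization.Away (algebraMap R (Rd K R d) f) →+* Rd K (Localization.Away f) d :=
  IsLocalization.Away.lift _
      (g := Rd.map (IsScalarTower.toAlgHom K R (Localization.Away f))) <| by
    rw [Rd.map_algebraMap]
    exact (IsLocalization.Away.algebraMap_isUnit f).map _

lemma awayHom_algebraMap_gen (g : R) (i : MIdx d) :
    awayHom K d f (algebraMap _ _ (gen K R g i)) =
      gen K (Localization.Away f) (algebraMap R (Localization.Away f) g) i :=
  (IsLocalization.Away.lift_eq _ _ _).trans (Rd.map_gen _ g i)

noncomputable def awayTaylor :
    Localization.Away f →+*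
      MvPowerSeries (Fin d) (Localization.Away (algebraMap R (Rd K R d) f)) :=
  IsLocalization.Away.lift f (g := (MvPowerSeries.map (algebraMap _ _)).comp (IHom K R d)) <| by
    rw [MvPowerSeries.isUnit_iff_constantCoeff, RingHom.comp_apply,
      MvPowerSeries.constantCoeff_map, constantCoeff_IHom]
    exact IsLocalization.Away.algebraMap_isUnit _

lemma awayTaylor_algebraMap (g : R) :
    awayTaylor K d f (algebraMap R _ g) = MvPowerSeries.map (algebraMap _ _) (IHom K R d g) :=
  IsLocalization.Away.lift_eq _ _ _

noncomputable def awayInv :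
    Rd K (Localization.Away f) d →+* Localization.Away (algebraMap R (Rd K R d) f) :=
  Rd.lift (awayTaylor K d f) fun c i hi => by
    rw [IsScalarTower.algebraMap_apply K R, awayTaylor_algebraMap, MvPowerSeries.coeff_map,
      coeff_IHom, gen_algebraMap_of_ne_zero c hi, map_zero]

lemma map_awayHom_comp_awayTaylor :
    (MvPowerSeries.map (awayHom K d f)).comp (awayTaylor K d f) =
      IHom K (Localization.Away f) d := by
  refine IsLocalization.ringHom_ext (Submonoid.powers f) (RingHom.ext fun g => ?_)
  ext i
  simp only [RingHom.comp_apply, awayTaylor_algebraMap, MvPowerSeries.coeff_map, coeff_IHom,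
    awayHom_algebraMap_gen]

noncomputable def awayEquiv :
    Localization.Away (algebraMap R (Rd K R d) f) ≃+* Rd K (Localization.Away f) d :=
  RingEquiv.ofRingHom (awayHom K d f) (awayInv K d f)
    (Rd.hom_ext fun x i => by
      rw [RingHom.comp_apply, awayInv, Rd.lift_gen, RingHom.id_apply, ← MvPowerSeries.coeff_map,
        ← RingHom.comp_apply, map_awayHom_comp_awayTaylor, coeff_IHom])
    (away_hom_ext K d f fun g i => by
      rw [RingHom.comp_apply, awayHom_algebraMap_gen, awayInv, Rd.lift_gen,
        awayTaylor_algebraMap, MvPowerSeries.coeff_map, coeff_IHom, RingHom.id_apply])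

lemma awayEquiv_algebraMap_gen (g : R) (i : MIdx d) :
    awayEquiv K d f (algebraMap _ _ (gen K R g i)) =
      gen K (Localization.Away f) (algebraMap R (Localization.Away f) g) i :=
  awayHom_algebraMap_gen K d f g i

end Away

end Paper

theorem statement0_general (K R : Type) [Field K] [CommRing R] [Algebra K R]
    (d : ℕ) (f : R) :
    (∃ ψ : Localization.Away (algebraMap R (Paper.Rd K R d) f) →+*
        Paper.Rd K (Localization.Away f) d,
      ∀ (g : R) (i : Paper.MIdx d),
        ψ (algebraMap (Paper.Rd K R d)
            (Localization.Away (algebraMap R (Paper.Rd K R d) f)) (Paper.gen K R g i)) =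
          Paper.gen K (Localization.Away f) (algebraMap R (Localization.Away f) g) i) ∧
    (∀ ψ : Localization.Away (algebraMap R (Paper.Rd K R d) f) →+*
        Paper.Rd K (Localization.Away f) d,
      (∀ (g : R) (i : Paper.MIdx d),
        ψ (algebraMap (Paper.Rd K R d)
            (Localization.Away (algebraMap R (Paper.Rd K R d) f)) (Paper.gen K R g i)) =
          Paper.gen K (Localization.Away f) (algebraMap R (Localization.Away f) g) i) →
      Function.Bijective ψ) := by
  refine ⟨⟨Paper.awayHom K d f, Paper.awayHom_algebraMap_gen K d f⟩, fun ψ hψ => ?_⟩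
  have hψ_eq : ψ = Paper.awayEquiv K d f := Paper.away_hom_ext K d f fun g i => by
    rw [hψ, RingEquiv.coe_toRingHom, Paper.awayEquiv_algebraMap_gen]
  exact hψ_eq ▸ (Paper.awayEquiv K d f).bijective

/-- For `f ≠ 0` in `R`, the `K`-algebra homomorphism
`R^𝐝 → (R_f)^𝐝` induced by the localization map `R → R_f` induces a homomorphism
`ψ_f : (R^𝐝)_f → (R_f)^𝐝` on the localization of `R^𝐝` at the image of `f`, and
any such `ψ_f` is an isomorphism (bijective). -/
theorem statement0 (K R : Type) [Field K] [CharZero K] [CommRing R] [Algebra K R]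
    (d : ℕ) (hd : 1 ≤ d) (f : R) (hf : f ≠ 0) :
    (∃ ψ : Localization.Away (algebraMap R (Paper.Rd K R d) f) →+*
        Paper.Rd K (Localization.Away f) d,
      ∀ (g : R) (i : Paper.MIdx d),
        ψ (algebraMap (Paper.Rd K R d)
            (Localization.Away (algebraMap R (Paper.Rd K R d) f)) (Paper.gen K R g i)) =
          Paper.gen K (Localization.Away f) (algebraMap R (Localization.Away f) g) i) ∧
    (∀ ψ : Localization.Away (algebraMap R (Paper.Rd K R d) f) →+*
        Paper.Rd K (Localization.Away f) d,
      (∀ (g : R) (i : Paper.MIdx d),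
        ψ (algebraMap (Paper.Rd K R d)
            (Localization.Away (algebraMap R (Paper.Rd K R d) f)) (Paper.gen K R g i)) =
          Paper.gen K (Localization.Away f) (algebraMap R (Localization.Away f) g) i) →
      Function.Bijective ψ) :=
  statement0_general K R d f
end

section
/- Let A be a commutative ring, let D_1,…,D_d be derivations of A that pairwise commute (⁅D_c, D_{c'}⁆ = 0 for all c, c'), and let J be an invertible d×d matrix over A whose entries satisfy the symmetry condition D_c(J^a_b) = D_b(J^a_c) for all a, b, c. Define, for each a ∈ {1,…,d}, the derivation X_a := Σ_{c=1}^d (J^{-1})^c_a • D_c, using the A-module structure on derivations. Then the X_a pairwise commute: ⁅X_a, X_b⁆ = 0 for all a, b. -/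
/-!
For `X_r = Σ_c r_c • D_c` with commuting `D_c`, the second-order parts of `X_r X_s` and `X_s X_r`
cancel, so `⁅X_r, X_s⁆ = Σ_e (X_r s_e - X_s r_e) • D_e`. For the columns `r, s` of `K = J⁻¹`,
differentiating `K J = 1` gives `D_c K = -K (D_c J) K`, so `X_a K_{eb} = -Σ K_{ep} K_{ca} K_{qb} D_c J_{pq}`,
which the symmetry `D_c J_{pq} = D_q J_{pc}` makes symmetric in `a, b`.
-/

section

open Finset Matrix

variable {R A : Type*} [CommSemiring R] [CommRing A] [Algebra R A]

theorem Derivation.sum_smul_apply {ι : Type*} (s : Finset ι) (r : ι → A)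
    (D : ι → Derivation R A A) (x : A) :
    (∑ c ∈ s, r c • D c) x = ∑ c ∈ s, r c * D c x := by
  rw [← Derivation.coeFnAddMonoidHom_apply, map_sum, Finset.sum_apply]
  rfl

theorem Derivation.matrix_map_mul {m n p : Type*} [Fintype n] (D : Derivation R A A)
    (M : Matrix m n A) (N : Matrix n p A) :
    (M * N).map D = M.map D * N + M * N.map D := by
  ext i j
  simp [mul_apply, Derivation.leibniz, sum_add_distrib, mul_comm, add_comm]

theorem Derivation.matrix_map_inv {n : Type*} [Fintype n] [DecidableEq n]
    (D : Derivation R A A) {J : Matrix n n A} (hJ : IsUnit J) :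
    J⁻¹.map D = -(J⁻¹ * J.map D * J⁻¹) := by
  have hdet : IsUnit J.det := (isUnit_iff_isUnit_det J).mp hJ
  have hleibniz : J⁻¹.map D * J + J⁻¹ * J.map D = 0 := by
    rw [← matrix_map_mul, nonsing_inv_mul J hdet]
    ext i j
    by_cases h : i = j <;> simp [h]
  calc J⁻¹.map D = J⁻¹.map D * J * J⁻¹ := by rw [mul_assoc, mul_nonsing_inv J hdet, mul_one]
    _ = -(J⁻¹ * J.map D * J⁻¹) := by rw [eq_neg_of_add_eq_zero_left hleibniz, neg_mul]

variable {ι : Type*} [Fintype ι] (D : ι → Derivation R A A)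

theorem Derivation.sum_smul_apply_sum_smul_apply (r s : ι → A) (y : A) :
    (∑ c, r c • D c) ((∑ c, s c • D c) y) =
      ∑ c, ∑ e, r c * s e * D c (D e y) + ∑ e, (∑ c, r c • D c) (s e) * D e y := by
  simp only [Derivation.sum_smul_apply, map_sum, Derivation.leibniz, smul_eq_mul, mul_sum,
    sum_add_distrib]
  congr 1
  · rw [sum_comm]
    exact sum_congr rfl fun c _ => sum_congr rfl fun e _ => by ring
  · refine sum_congr rfl fun e _ => ?_
    rw [sum_mul]
    exact sum_congr rfl fun c _ => by ring

theorem Derivation.sum_smul_apply_comm (hD : ∀ c c' z, D c (D c' z) = D c' (D c z))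
    {r s : ι → A} (hrs : ∀ e, (∑ c, r c • D c) (s e) = (∑ c, s c • D c) (r e)) (y : A) :
    (∑ c, r c • D c) ((∑ c, s c • D c) y) = (∑ c, s c • D c) ((∑ c, r c • D c) y) := by
  rw [sum_smul_apply_sum_smul_apply, sum_smul_apply_sum_smul_apply, sum_comm (γ := ι)]
  simp only [hrs, hD _ _ y, mul_comm (r _)]

theorem Matrix.sum_inv_mul_derivation_inv_comm {J : Matrix ι ι A} [DecidableEq ι] (hJ : IsUnit J)
    (hsym : ∀ a b c, D c (J a b) = D b (J a c)) (a b e : ι) :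
    ∑ c, J⁻¹ c a * D c (J⁻¹ e b) = ∑ c, J⁻¹ c b * D c (J⁻¹ e a) := by
  have hinv (c i j : ι) : D c (J⁻¹ i j) = -(J⁻¹ * J.map (D c) * J⁻¹) i j := by
    simpa using congrFun (congrFun (Derivation.matrix_map_inv (D c) hJ) i) j
  simp only [hinv, mul_apply, map_apply, sum_mul, mul_sum, mul_neg, sum_neg_distrib, neg_inj]
  rw [sum_comm]
  refine sum_congr rfl fun q _ => sum_congr rfl fun c _ => sum_congr rfl fun p _ => ?_
  rw [hsym p c q]
  ring
end

/-- Let `A` be a commutative ring, `D_1,…,D_d` pairwise commuting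
derivations of `A`, and `J` an invertible `d×d` matrix over `A` satisfying the
symmetry `D_c(J^a_b) = D_b(J^a_c)`. Then the derivations
`X_a = Σ_c (J⁻¹)^c_a • D_c` pairwise commute. -/
theorem statement12 (d : ℕ) (A : Type*) [CommRing A]
    (D : Fin d → Derivation ℤ A A)
    (hcomm : ∀ (c c' : Fin d) (z : A), D c (D c' z) = D c' (D c z))
    (J : Matrix (Fin d) (Fin d) A) (hJ : IsUnit J)
    (hsym : ∀ a b c : Fin d, D c (J a b) = D b (J a c)) :
    ∀ (a b : Fin d) (y : A),
      (∑ c : Fin d, J⁻¹ c a • D c) ((∑ c : Fin d, J⁻¹ c b • D c) y) =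
      (∑ c : Fin d, J⁻¹ c b • D c) ((∑ c : Fin d, J⁻¹ c a • D c) y) := by
  intro a b y
  refine Derivation.sum_smul_apply_comm D hcomm (fun e => ?_) y
  simp only [Derivation.sum_smul_apply]
  exact Matrix.sum_inv_mul_derivation_inv_comm D hJ hsym a b e
end

section
/- Let n be a natural number and let G be a simple graph on the vertex set Fin (n+1), with distinguished vertex h := Fin.last n. Assume: (a) G is connected; (b) G is 1-vertex irreducible; (c) every vertex of G has degree at least 3; and (d) G admits an orientation r such that every vertex other than h has at most one outgoing edge. Then n ≥ 3 and there exists a permutation σ of Fin (n+1) with σ(h) = h such that σ is a graph isomorphism from G onto the wheel graph W_n: for all u, v ∈ Fin (n+1), G.Adj u v holds if and only if W_n.Adj (σ u) (σ v). -/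
namespace Paper

/-- The wheel graph `W_n` on `Fin (n+1)`: the hub `Fin.last n` is adjacent to each
of the `n` rim vertices, and two rim vertices are adjacent iff they differ by
`±1` modulo `n`. -/
def wheel (n : ℕ) : SimpleGraph (Fin (n + 1)) where
  Adj u v := u ≠ v ∧
    (u = Fin.last n ∨ v = Fin.last n ∨
      ((u : ℕ) + 1) % n = (v : ℕ) ∨ ((v : ℕ) + 1) % n = (u : ℕ))
  symm := by
    constructor
    intro u v hv
    refine ⟨hv.1.symm, ?_⟩
    tauto
  loopless := by
    constructor
    intro v hv
    exact hv.1 rfl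

end Paper

/-!
Count out- and in-degrees. A rim vertex has out-degree at most 1, hence in-degree at least 2,
while the hub has degree at most `n`; as total out-degree equals total in-degree, all these
bounds are tight. So the hub points to every rim vertex and "the unique out-neighbour" is a
permutation `π` of the rim, with `G` the wheel-like graph `wheelOfPerm h π`. Since `G - h` is
connected, `π` is a single `n`-cycle, hence conjugate to the rim rotation of `W_n` by a
permutation that must fix the hub, the only fixed point of both.
-/

namespace Paper

open Finset Equiv

variable {V : Type*}

def wheelOfPerm (c : V) (π : Perm V) : SimpleGraph V :=
  SimpleGraph.fromRel fun u v => u = c ∨ π u = v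

theorem wheelOfPerm_adj {c : V} {π : Perm V} {u v : V} :
    (wheelOfPerm c π).Adj u v ↔ u ≠ v ∧ (u = c ∨ v = c ∨ π u = v ∨ π v = u) := by
  simp only [wheelOfPerm, SimpleGraph.fromRel_adj]
  tauto

theorem wheelOfPerm_adj_iff_of_semiconj {c c' : V} {π π' σ : Perm V} (hc : σ c = c')
    (hσ : ∀ x, σ (π x) = π' (σ x)) (u v : V) :
    (wheelOfPerm c π).Adj u v ↔ (wheelOfPerm c' π').Adj (σ u) (σ v) := by
  simp only [wheelOfPerm_adj, ← hc, ← hσ, σ.injective.eq_iff, ne_eq]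

-- `Fin.cycleRange ⟨n - 1, _⟩` is the cycle `(0 1 … n-1)`: the rotation of the rim of `wheel n`.
def rimRotation (n : ℕ) : Perm (Fin (n + 1)) :=
  Fin.cycleRange ⟨n - 1, by omega⟩

theorem coe_rimRotation_apply {n : ℕ} {u : Fin (n + 1)} (hu : (u : ℕ) < n) :
    (rimRotation n u : ℕ) = ((u : ℕ) + 1) % n := by
  rw [rimRotation, Fin.coe_cycleRange_of_le (Fin.le_def.2 (by simp only; omega))]
  split_ifs with h
  · rw [show (u : ℕ) + 1 = n by rw [Fin.ext_iff] at h; simp only at h; omega, Nat.mod_self]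
  · rw [Nat.mod_eq_of_lt (by rw [Fin.ext_iff] at h; simp only at h; omega)]

theorem wheel_eq_wheelOfPerm (n : ℕ) :
    wheel n = wheelOfPerm (Fin.last n) (rimRotation n) := by
  have hrim : ∀ u v : Fin (n + 1), u ≠ Fin.last n →
      (rimRotation n u = v ↔ ((u : ℕ) + 1) % n = v) := fun u v hu => by
    rw [Fin.ext_iff, coe_rimRotation_apply (Fin.val_lt_last hu)]
  ext u v
  simp only [wheel, wheelOfPerm_adj]
  by_cases hu : u = Fin.last n
  · simp [hu]
  by_cases hv : v = Fin.last n
  · simp [hv]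
  simp only [hu, hv, false_or, hrim u v hu, hrim v u hv]

theorem cycleType_rimRotation {n : ℕ} (hn : 2 ≤ n) : (rimRotation n).cycleType = {n} := by
  rw [rimRotation,
    Fin.cycleType_cycleRange (by simp only [ne_eq, Fin.ext_iff, Fin.val_zero]; omega)]
  congr 1
  simp only
  omega

theorem eq_last_of_rimRotation_apply_eq_self {n : ℕ} (hn : 2 ≤ n) {x : Fin (n + 1)}
    (hx : rimRotation n x = x) : x = Fin.last n := by
  by_contra hlast
  have hxn := Fin.val_lt_last hlast
  have hsucc := congrArg Fin.val hx
  rw [coe_rimRotation_apply hxn] at hsucc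
  rcases Nat.lt_or_ge ((x : ℕ) + 1) n with hlt | hge
  · rw [Nat.mod_eq_of_lt hlt] at hsucc; omega
  · rw [show (x : ℕ) + 1 = n by omega, Nat.mod_self] at hsucc; omega

variable [Fintype V] [DecidableEq V]

theorem exists_conj_fixing_of_cycleType_eq {π₁ π₂ : Perm V} {c : V}
    (hcyc : π₁.cycleType = π₂.cycleType) (h₁ : π₁ c = c) (h₂ : ∀ x, π₂ x = x → x = c) :
    ∃ σ : Perm V, σ c = c ∧ ∀ x, σ (π₁ x) = π₂ (σ x) := by
  obtain ⟨σ, hσ⟩ := isConj_iff.1 (Perm.isConj_iff_cycleType_eq.2 hcyc)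
  have hσπ : ∀ x, σ (π₁ x) = π₂ (σ x) := fun x => by
    rw [← hσ]; simp
  exact ⟨σ, h₂ _ (by rw [← hσπ, h₁]), hσπ⟩

theorem isCycle_of_connected_induce {π : Perm V} {c : V} (hπ : π.support = {c}ᶜ)
    (hconn : ((wheelOfPerm c π).induce {c}ᶜ).Connected) : π.IsCycle := by
  have hmoved : ∀ {x}, π x ≠ x ↔ x ≠ c := fun {x} => by
    rw [← Perm.mem_support, hπ, mem_compl, mem_singleton]
  have hstep : ∀ a b : ({c}ᶜ : Set V),
      ((wheelOfPerm c π).induce {c}ᶜ).Adj a b → π.SameCycle a b := by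
    rintro ⟨a, ha⟩ ⟨b, hb⟩ hab
    rcases wheelOfPerm_adj.1 (show (wheelOfPerm c π).Adj a b from hab) with
      ⟨-, ha' | hb' | hab | hba⟩
    · exact absurd ha' ha
    · exact absurd hb' hb
    · exact hab ▸ Perm.sameCycle_apply_right.2 .rfl
    · exact hba ▸ Perm.sameCycle_apply_left.2 .rfl
  obtain ⟨x⟩ := hconn.nonempty
  refine ⟨x, hmoved.2 x.2, fun y hy => ?_⟩
  exact Relation.reflTransGen_le_of_equivalence_of_le ((Perm.SameCycle.equivalence π).comap _)
    hstep _ _ ((SimpleGraph.reachable_iff_reflTransGen _ _).1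
      (hconn.preconnected x ⟨y, hmoved.1 hy⟩))

theorem hub_rim_counts_eq (c : V) {o i : V → ℕ} (hsum : ∑ v, o v = ∑ v, i v)
    (ho : ∀ v ≠ c, o v ≤ 1) (hoi : ∀ v ≠ c, 3 ≤ o v + i v)
    (hc : o c + i c ≤ Fintype.card V - 1) :
    o c = Fintype.card V - 1 ∧ ∀ v ≠ c, o v = 1 ∧ i v = 2 := by
  rw [← sum_erase_add _ _ (mem_univ c), ← sum_erase_add _ _ (mem_univ c)] at hsum
  set s := univ.erase c
  have hs : #s = Fintype.card V - 1 := by rw [card_erase_of_mem (mem_univ c), card_univ]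
  have hos : ∑ v ∈ s, o v ≤ #s * 1 :=
    sum_le_card_nsmul _ _ _ fun v hv => ho v (ne_of_mem_erase hv)
  have hois : #s * 3 ≤ ∑ v ∈ s, o v + ∑ v ∈ s, i v := by
    rw [← sum_add_distrib]
    exact card_nsmul_le_sum _ _ _ fun v hv => hoi v (ne_of_mem_erase hv)
  have ho_tight : ∑ v ∈ s, o v = ∑ v ∈ s, 1 := by rw [sum_const, smul_eq_mul]; omega
  have hoi_tight : ∑ v ∈ s, 3 = ∑ v ∈ s, (o v + i v) := by
    rw [sum_const, smul_eq_mul, sum_add_distrib]; omega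
  rw [sum_eq_sum_iff_of_le fun v hv => ho v (ne_of_mem_erase hv)] at ho_tight
  rw [sum_eq_sum_iff_of_le fun v hv => hoi v (ne_of_mem_erase hv)] at hoi_tight
  refine ⟨by omega, fun v hv => ?_⟩
  have h₁ := ho_tight v (mem_erase.2 ⟨hv, mem_univ v⟩)
  have h₃ := hoi_tight v (mem_erase.2 ⟨hv, mem_univ v⟩)
  omega

variable {G : SimpleGraph V} [DecidableRel G.Adj] {r : V → V → Prop}

theorem orientation_hub_rim (c : V) (hor : ∀ u v, G.Adj u v ↔ r u v ∨ r v u)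
    (hna : ∀ u v, ¬ (r u v ∧ r v u)) (hout : ∀ u, u ≠ c → ∀ v w, r u v → r u w → v = w)
    (hdeg : ∀ v ≠ c, 3 ≤ G.degree v) :
    (∀ v ≠ c, r c v) ∧ (∀ v ≠ c, ∃ w, r v w) ∧
      ∀ u₁ u₂ w, u₁ ≠ c → u₂ ≠ c → r u₁ w → r u₂ w → u₁ = u₂ := by
  classical
  have hdeg_eq : ∀ v, G.degree v = #{w | r v w} + #{w | r w v} := fun v => by
    rw [← card_union_of_disjoint (disjoint_filter.2 fun w _ hvw hwv => hna v w ⟨hvw, hwv⟩),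
      ← filter_or, ← G.card_neighborFinset_eq_degree, G.neighborFinset_eq_filter]
    simp only [hor]
  have hsum : ∑ v, #{w | r v w} = ∑ v, #{w | r w v} := by
    simp only [card_filter]
    exact sum_comm
  have ho : ∀ v ≠ c, #{w | r v w} ≤ 1 := fun v hv =>
    card_le_one.2 fun a ha b hb => hout v hv a b (mem_filter.1 ha).2 (mem_filter.1 hb).2
  have hc : #{w | r c w} + #{w | r w c} ≤ Fintype.card V - 1 := by
    have := G.degree_lt_card_verts c
    rw [hdeg_eq] at this
    omega
  obtain ⟨hoc, hrim⟩ := hub_rim_counts_eq c hsum ho (fun v hv => hdeg_eq v ▸ hdeg v hv) hc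
  have hhub : ∀ v ≠ c, r c v := by
    have hsub : ({w | r c w} : Finset V) ⊆ univ.erase c := fun w hw =>
      mem_erase.2 ⟨fun h => hna c c ⟨h ▸ (mem_filter.1 hw).2, h ▸ (mem_filter.1 hw).2⟩,
        mem_univ w⟩
    have heq := eq_of_subset_of_card_le hsub <| by
      rw [hoc, card_erase_of_mem (mem_univ c), card_univ]
    intro v hv
    have hmem : v ∈ ({w | r c w} : Finset V) := heq ▸ mem_erase.2 ⟨hv, mem_univ v⟩
    exact (mem_filter.1 hmem).2
  refine ⟨hhub, fun v hv => ?_, fun u₁ u₂ w h₁ h₂ hr₁ hr₂ => ?_⟩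
  · obtain ⟨w, hw⟩ := card_pos.1 ((hrim v hv).1 ▸ one_pos : 0 < #{w | r v w})
    exact ⟨w, (mem_filter.1 hw).2⟩
  · have hw : w ≠ c := fun h => hna c u₁ ⟨hhub u₁ h₁, h ▸ hr₁⟩
    have hmem : c ∈ ({u | r u w} : Finset V) := mem_filter.2 ⟨mem_univ c, hhub w hw⟩
    have hone : #(({u | r u w} : Finset V).erase c) ≤ 1 := by
      rw [card_erase_of_mem hmem, (hrim w hw).2]
    exact card_le_one.1 hone u₁ (by simp [h₁, hr₁]) u₂ (by simp [h₂, hr₂])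


theorem exists_perm_of_out_neighbour (c : V) (hna : ∀ u v, ¬ (r u v ∧ r v u))
    (hhub : ∀ v ≠ c, r c v) (hex : ∀ v ≠ c, ∃ w, r v w)
    (hinj : ∀ u₁ u₂ w, u₁ ≠ c → u₂ ≠ c → r u₁ w → r u₂ w → u₁ = u₂) :
    ∃ π : Perm V, π c = c ∧ ∀ v ≠ c, r v (π v) := by
  choose f hf using hex
  set g : V → V := fun v => if hv : v = c then c else f v hv
  have hgc : g c = c := dif_pos rfl
  have hg : ∀ v ≠ c, r v (g v) := fun v hv => by simpa [g, hv] using hf v hv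
  have hg_ne_c : ∀ v ≠ c, g v ≠ c := fun v hv h => hna c v ⟨hhub v hv, h ▸ hg v hv⟩
  have hginj : Function.Injective g := by
    intro u v huv
    by_cases hu : u = c <;> by_cases hv : v = c
    · rw [hu, hv]
    · rw [hu, hgc] at huv; exact absurd huv.symm (hg_ne_c v hv)
    · rw [hv, hgc] at huv; exact absurd huv (hg_ne_c u hu)
    · exact hinj u v (g u) hu hv (hg u hu) (huv ▸ hg v hv)
  exact ⟨Equiv.ofBijective g (Finite.injective_iff_bijective.1 hginj), hgc, hg⟩

theorem exists_perm_eq_wheelOfPerm (c : V) (hor : ∀ u v, G.Adj u v ↔ r u v ∨ r v u)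
    (hna : ∀ u v, ¬ (r u v ∧ r v u)) (hout : ∀ u, u ≠ c → ∀ v w, r u v → r u w → v = w)
    (hdeg : ∀ v ≠ c, 3 ≤ G.degree v) :
    ∃ π : Perm V, π.support = {c}ᶜ ∧ G = wheelOfPerm c π := by
  obtain ⟨hhub, hex, hinj⟩ := orientation_hub_rim c hor hna hout hdeg
  obtain ⟨π, hπc, hπ⟩ := exists_perm_of_out_neighbour c hna hhub hex hinj
  have hπ_ne : ∀ v ≠ c, π v ≠ v := fun v hv h => by
    have hvv := h ▸ hπ v hv
    exact hna v v ⟨hvv, hvv⟩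
  have hr : ∀ u v, r u v ↔ (u = c ∧ v ≠ c) ∨ (u ≠ c ∧ π u = v) := by
    intro u v
    by_cases hu : u = c
    · subst hu
      exact ⟨fun h => .inl ⟨rfl, fun hv => hna u u ⟨hv ▸ h, hv ▸ h⟩⟩,
        by rintro (⟨-, hv⟩ | ⟨hu, -⟩); exacts [hhub v hv, absurd rfl hu]⟩
    · exact ⟨fun h => .inr ⟨hu, hout u hu _ _ (hπ u hu) h⟩,
        by rintro (⟨hu', -⟩ | ⟨-, rfl⟩); exacts [absurd hu' hu, hπ u hu]⟩
  refine ⟨π, ?_, ?_⟩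
  · ext v
    by_cases hv : v = c
    · simp [Perm.mem_support, hv, hπc]
    · simp [Perm.mem_support, hv, hπ_ne v hv]
  · ext u v
    rw [hor, hr, hr, wheelOfPerm_adj]
    by_cases hu : u = c <;> by_cases hv : v = c
    · subst hu hv; simp
    · subst hu; simp [hv, Ne.symm hv]
    · subst hv; simp [hu]
    · simp only [hu, hv, false_and, false_or, ne_eq, not_false_eq_true, true_and]
      refine ⟨fun h => ⟨?_, h⟩, And.right⟩
      rintro rfl
      exact h.elim (hπ_ne u hu) (hπ_ne u hu)

end Paper

theorem statement14_general (n : ℕ) (G : SimpleGraph (Fin (n + 1))) [DecidableRel G.Adj]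
    (hirr : ∀ v : Fin (n + 1),
      (SimpleGraph.induce ({v}ᶜ : Set (Fin (n + 1))) G).Connected)
    (hdeg : ∀ v : Fin (n + 1), 3 ≤ G.degree v)
    (r : Fin (n + 1) → Fin (n + 1) → Prop)
    (hor : ∀ u v, G.Adj u v ↔ (r u v ∨ r v u))
    (hna : ∀ u v, ¬ (r u v ∧ r v u))
    (hout : ∀ u, u ≠ Fin.last n → ∀ v w, r u v → r u w → v = w) :
    3 ≤ n ∧
    ∃ σ : Equiv.Perm (Fin (n + 1)), σ (Fin.last n) = Fin.last n ∧
      ∀ u v : Fin (n + 1), G.Adj u v ↔ (Paper.wheel n).Adj (σ u) (σ v) := by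
  have hn : 3 ≤ n := (hdeg (Fin.last n)).trans <| by
    simpa [Nat.lt_succ_iff] using G.degree_lt_card_verts (Fin.last n)
  obtain ⟨π, hπ, rfl⟩ :=
    Paper.exists_perm_eq_wheelOfPerm (Fin.last n) hor hna hout fun v _ => hdeg v
  have hcycleType : π.cycleType = (Paper.rimRotation n).cycleType := by
    rw [(Paper.isCycle_of_connected_induce hπ (hirr _)).cycleType, hπ,
      Paper.cycleType_rimRotation (by omega), Finset.card_compl, Finset.card_singleton,
      Fintype.card_fin, Nat.add_sub_cancel]
  obtain ⟨σ, hσ, hσπ⟩ := Paper.exists_conj_fixing_of_cycleType_eq hcycleType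
    (Equiv.Perm.notMem_support.1 (hπ ▸ Finset.notMem_compl.2 (Finset.mem_singleton_self _)))
    fun _ => Paper.eq_last_of_rimRotation_apply_eq_self (by omega)
  refine ⟨hn, σ, hσ, fun u v => ?_⟩
  rw [Paper.wheel_eq_wheelOfPerm]
  exact Paper.wheelOfPerm_adj_iff_of_semiconj hσ hσπ u v

/-- A connected, 1-vertex irreducible simple graph on `Fin (n+1)`
in which every vertex has degree at least 3, admitting an orientation in which
every vertex other than `h = Fin.last n` has at most one outgoing edge, satisfies
`n ≥ 3` and is isomorphic to the wheel `W_n` via a permutation fixing `h`. -/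
theorem statement14 (n : ℕ) (G : SimpleGraph (Fin (n + 1))) [DecidableRel G.Adj]
    (hconn : G.Connected)
    (hirr : ∀ v : Fin (n + 1),
      (SimpleGraph.induce ({v}ᶜ : Set (Fin (n + 1))) G).Connected)
    (hdeg : ∀ v : Fin (n + 1), 3 ≤ G.degree v)
    (r : Fin (n + 1) → Fin (n + 1) → Prop)
    (hor : ∀ u v, G.Adj u v ↔ (r u v ∨ r v u))
    (hna : ∀ u v, ¬ (r u v ∧ r v u))
    (hout : ∀ u, u ≠ Fin.last n → ∀ v w, r u v → r u w → v = w) :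
    3 ≤ n ∧
    ∃ σ : Equiv.Perm (Fin (n + 1)), σ (Fin.last n) = Fin.last n ∧
      ∀ u v : Fin (n + 1), G.Adj u v ↔ (Paper.wheel n).Adj (σ u) (σ v) :=
  statement14_general n G hirr hdeg r hor hna hout
end

section
/- Let G be a simple graph on a finite vertex set V, let h ∈ V, and assume that every vertex other than h has degree at least 3. Let r be an orientation of G such that every vertex other than h has at most one outgoing edge. Then h has no incoming edge: there is no vertex u with r u h. -/
open Finset

namespace Relation

variable {V : Type*} [Fintype V] (r : V → V → Prop) [DecidableRel r]

def outDegree (v : V) : ℕ := #{w | r v w}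

def inDegree (v : V) : ℕ := #{w | r w v}

theorem sum_outDegree_eq_sum_inDegree : ∑ v, outDegree r v = ∑ v, inDegree r v := by
  simp only [outDegree, inDegree, card_filter]
  exact sum_comm

variable {r}

theorem outDegree_lt_card (hirr : ∀ v, ¬ r v v) (v : V) : outDegree r v < Fintype.card V :=
  card_lt_univ_of_notMem (s := {w | r v w}) (x := v) (by simpa using hirr v)

theorem outDegree_le_one {v : V} (hfun : ∀ w w', r v w → r v w' → w = w') :
    outDegree r v ≤ 1 :=
  card_le_one.2 fun w hw w' hw' => hfun w w' (mem_filter.1 hw).2 (mem_filter.1 hw').2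

/-- Double counting: the in-degree surplus of at least `card V - 1` at the other vertices must be
balanced by `h`, whose out-degree is below `card V`, leaving no room for in-degree at `h`. -/
theorem inDegree_eq_zero_of_forall_ne (hirr : ∀ v, ¬ r v v) {h : V}
    (hlt : ∀ v, v ≠ h → outDegree r v < inDegree r v) : inDegree r h = 0 := by
  classical
  have hsum := sum_outDegree_eq_sum_inDegree r
  rw [← add_sum_erase _ _ (mem_univ h), ← add_sum_erase _ _ (mem_univ h)] at hsum
  have hrest : ∑ v ∈ univ.erase h, (outDegree r v + 1) ≤ ∑ v ∈ univ.erase h, inDegree r v :=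
    sum_le_sum fun v hv => hlt v (ne_of_mem_erase hv)
  rw [sum_add_distrib, sum_const, card_erase_of_mem (mem_univ h), card_univ,
    smul_eq_mul, mul_one] at hrest
  have := outDegree_lt_card hirr h
  omega

end Relation

open Relation in
theorem SimpleGraph.degree_eq_outDegree_add_inDegree {V : Type*} [Fintype V] {G : SimpleGraph V}
    [DecidableRel G.Adj] {r : V → V → Prop} [DecidableRel r]
    (hor : ∀ u v, G.Adj u v ↔ (r u v ∨ r v u)) (hna : ∀ u v, ¬ (r u v ∧ r v u)) (v : V) :
    G.degree v = outDegree r v + inDegree r v := by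
  classical
  rw [← card_neighborFinset_eq_degree, outDegree, inDegree, ← card_union_of_disjoint]
  · congr 1
    ext w
    simp [hor v w]
  · exact disjoint_filter.2 fun w _ hvw hwv => hna v w ⟨hvw, hwv⟩

open Relation in
/-- If every vertex other than `h` has degree at least 3 and `r`
is an orientation in which every vertex other than `h` has at most one outgoing
edge, then `h` has no incoming edge. -/
theorem statement15 (V : Type*) [Fintype V] (G : SimpleGraph V) [DecidableRel G.Adj]
    (h : V) (hdeg : ∀ v : V, v ≠ h → 3 ≤ G.degree v)
    (r : V → V → Prop)
    (hor : ∀ u v : V, G.Adj u v ↔ (r u v ∨ r v u))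
    (hna : ∀ u v : V, ¬ (r u v ∧ r v u))
    (hout : ∀ u : V, u ≠ h → ∀ v w : V, r u v → r u w → v = w) :
    ¬ ∃ u : V, r u h := by
  classical
  rintro ⟨u, hu⟩
  have hlt : ∀ v, v ≠ h → outDegree r v < inDegree r v := fun v hv => by
    have := hdeg v hv
    rw [G.degree_eq_outDegree_add_inDegree hor hna] at this
    have := outDegree_le_one (hout v hv)
    omega
  have hzero := inDegree_eq_zero_of_forall_ne (fun v hv => hna v v ⟨hv, hv⟩) hlt
  exact card_ne_zero_of_mem (s := {w | r w h}) (mem_filter.2 ⟨mem_univ u, hu⟩) hzero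
end

section
/- Let G be a simple graph on a finite vertex set V, let h ∈ V, and assume that every vertex other than h has degree at least 3. Let r be an orientation of G such that every vertex other than h has at most one outgoing edge. Then every vertex w ≠ h has at most one incoming edge originating at a vertex other than h: there is at most one vertex u with u ≠ h and r u w. -/
/-!
Let `A` be the set of vertices other than `h`. Counting arcs inside `A` by their tails and by
their heads, the total in-degree within `A` equals the total out-degree within `A`, which is at
most `#A`. On the other hand a vertex of `A` has degree at least 3, at most one neighbour outside
`A` and at most one out-neighbour, so it has an in-neighbour in `A`. Hence every vertex of `A` has
exactly one in-neighbour in `A`.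
-/

open Finset

theorem Finset.card_filter_rel_eq_one_of_card_filter_rel_le_one {α : Type*} (A : Finset α)
    (r : α → α → Prop) [DecidableRel r]
    (hout : ∀ a ∈ A, #{b ∈ A | r a b} ≤ 1) (hin : ∀ a ∈ A, 1 ≤ #{b ∈ A | r b a}) :
    ∀ a ∈ A, #{b ∈ A | r b a} = 1 := by
  have hsum : ∑ a ∈ A, #{b ∈ A | r b a} ≤ ∑ _a ∈ A, 1 :=
    calc ∑ a ∈ A, #{b ∈ A | r b a} = ∑ a ∈ A, #{b ∈ A | r a b} :=
          (sum_card_bipartiteAbove_eq_sum_card_bipartiteBelow r).symm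
      _ ≤ ∑ _a ∈ A, 1 := sum_le_sum hout
  intro a ha
  exact ((sum_eq_sum_iff_of_le hin).1 (le_antisymm (sum_le_sum hin) hsum) a ha).symm

theorem SimpleGraph.degree_le_card_filter_add_card_filter_add_card_compl {V : Type*} [Fintype V]
    [DecidableEq V] (G : SimpleGraph V) [DecidableRel G.Adj] (r : V → V → Prop) [DecidableRel r]
    (hor : ∀ u v : V, G.Adj u v → r u v ∨ r v u) (s : Finset V) (a : V) :
    G.degree a ≤ #{b ∈ s | r a b} + #{b ∈ s | r b a} + #sᶜ := by
  have hsub : G.neighborFinset a ⊆ {b ∈ s | r a b} ∪ {b ∈ s | r b a} ∪ sᶜ := by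
    intro b hb
    rw [mem_neighborFinset] at hb
    by_cases hbs : b ∈ s
    · rcases hor a b hb with hab | hba
      · simp [hbs, hab]
      · simp [hbs, hba]
    · simp [hbs]
  rw [← card_neighborFinset_eq_degree]
  exact (card_le_card hsub).trans
    ((card_union_le _ _).trans (Nat.add_le_add_right (card_union_le _ _) _))

theorem statement16_general (V : Type*) [Fintype V] (G : SimpleGraph V) [DecidableRel G.Adj]
    (h : V) (hdeg : ∀ v : V, v ≠ h → 3 ≤ G.degree v)
    (r : V → V → Prop)
    (hor : ∀ u v : V, G.Adj u v ↔ (r u v ∨ r v u))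
    (hout : ∀ u : V, u ≠ h → ∀ v w : V, r u v → r u w → v = w) :
    ∀ w : V, w ≠ h → ∀ u u' : V, u ≠ h → u' ≠ h → r u w → r u' w → u = u' := by
  classical
  intro w hw u u' hu hu' hruw hru'w
  set A : Finset V := {h}ᶜ
  have hout_le : ∀ a ∈ A, #{b ∈ A | r a b} ≤ 1 := fun a ha =>
    card_le_one.2 fun b hb c hc =>
      hout a (by simpa [A] using ha) b c (mem_filter.1 hb).2 (mem_filter.1 hc).2
  have hin_pos : ∀ a ∈ A, 1 ≤ #{b ∈ A | r b a} := by
    intro a ha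
    have hdeg_le := G.degree_le_card_filter_add_card_filter_add_card_compl r
      (fun u v => (hor u v).1) A a
    have hA : #Aᶜ = 1 := by simp [A]
    have := hdeg a (by simpa [A] using ha)
    have := hout_le a ha
    omega
  have hin_w := card_filter_rel_eq_one_of_card_filter_rel_le_one A r hout_le hin_pos w
    (by simpa [A] using hw)
  exact card_le_one.1 hin_w.le u (by simp [A, hu, hruw]) u' (by simp [A, hu', hru'w])

/-- If every vertex other than `h` has degree at least 3 and `r`
is an orientation in which every vertex other than `h` has at most one outgoing
edge, then every vertex `w ≠ h` has at most one incoming edge originating at a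
vertex other than `h`. -/
theorem statement16 (V : Type*) [Fintype V] (G : SimpleGraph V) [DecidableRel G.Adj]
    (h : V) (hdeg : ∀ v : V, v ≠ h → 3 ≤ G.degree v)
    (r : V → V → Prop)
    (hor : ∀ u v : V, G.Adj u v ↔ (r u v ∨ r v u))
    (hna : ∀ u v : V, ¬ (r u v ∧ r v u))
    (hout : ∀ u : V, u ≠ h → ∀ v w : V, r u v → r u w → v = w) :
    ∀ w : V, w ≠ h → ∀ u u' : V, u ≠ h → u' ≠ h → r u w → r u' w → u = u' :=
  statement16_general V G h hdeg r hor hout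
end

section
/- Let n ≥ 3, let W_n be the wheel graph on Fin (n+1) with hub h := Fin.last n, and let r be an orientation of W_n such that every vertex other than h has at most one outgoing edge. Then every spoke is directed away from the hub (r h u holds for every rim vertex u, and r u h holds for no u), and the rim is a directed cycle: either r directs the rim edge from i to i+1 (mod n) for every rim vertex i, or r directs the rim edge from i+1 (mod n) to i for every rim vertex i. In particular, W_n has exactly two orientations with this property. -/
namespace Paper

/-- The successor of a rim vertex: `i ↦ (i+1) mod n`. -/
def rimNext (n : ℕ) (i : Fin (n + 1)) : Fin (n + 1) :=
  if hn : 0 < n then ⟨((i : ℕ) + 1) % n, Nat.lt_succ_of_lt (Nat.mod_lt _ hn)⟩ else i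

/-- `r` is an orientation of the wheel graph `W_n`. -/
def isWheelOrientation (n : ℕ) (r : Fin (n + 1) → Fin (n + 1) → Prop) : Prop :=
  (∀ u v, (wheel n).Adj u v ↔ (r u v ∨ r v u)) ∧ ∀ u v, ¬ (r u v ∧ r v u)

/-- Every vertex other than the hub has at most one outgoing edge. -/
def atMostOneOut (n : ℕ) (r : Fin (n + 1) → Fin (n + 1) → Prop) : Prop :=
  ∀ u, u ≠ Fin.last n → ∀ v w, r u v → r u w → v = w

/-- The "clockwise" orientation of the wheel: spokes away from the hub, rim edges
directed `i → i+1 (mod n)`. -/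
def cw (n : ℕ) (u v : Fin (n + 1)) : Prop :=
  (u = Fin.last n ∧ v ≠ Fin.last n) ∨
    (u ≠ Fin.last n ∧ v ≠ Fin.last n ∧ v = rimNext n u)

/-- The "counterclockwise" orientation of the wheel: spokes away from the hub, rim
edges directed `i+1 (mod n) → i`. -/
def ccw (n : ℕ) (u v : Fin (n + 1)) : Prop :=
  (u = Fin.last n ∧ v ≠ Fin.last n) ∨
    (u ≠ Fin.last n ∧ v ≠ Fin.last n ∧ u = rimNext n v)

end Paper

/-!
A rim vertex whose outgoing edge is known forces every other edge at it to be incoming. If one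
rim edge points from `i + 1` to `i`, this forcing propagates around the rim (the two rim
neighbours of a vertex are distinct since `n ≥ 3`) and reverses every rim edge. A rim vertex sending its edge to the hub starts such a propagation, which comes back
to it with a second outgoing edge; so all spokes leave the hub, and then either no rim edge or
every rim edge is reversed.
-/

namespace Paper

variable {n : ℕ}

section Rim

variable [NeZero n]

lemma rimNext_castSucc (i : Fin n) : rimNext n i.castSucc = (i + 1).castSucc := by
  ext
  simp [rimNext, NeZero.pos, Fin.val_add]

lemma forall_ne_last_rimNext_iff {p : Fin (n + 1) → Fin (n + 1) → Prop} :
    (∀ u, u ≠ Fin.last n → p u (rimNext n u)) ↔ ∀ i : Fin n, p i.castSucc (i + 1).castSucc := by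
  refine ⟨fun h i => rimNext_castSucc i ▸ h _ (Fin.castSucc_ne_last i), fun h u hu => ?_⟩
  obtain ⟨i, rfl⟩ := Fin.exists_castSucc_eq.2 hu
  rw [rimNext_castSucc]
  exact h i

lemma add_one_ne_self (hn : 2 ≤ n) (i : Fin n) : i + 1 ≠ i := by
  rw [Ne, add_eq_left, Fin.ext_iff, Fin.val_one', Fin.val_zero, Nat.mod_eq_of_lt (by omega)]
  omega

lemma add_one_add_one_ne_self (hn : 3 ≤ n) (i : Fin n) : i + 1 + 1 ≠ i := by
  rw [Ne, add_assoc, add_eq_left, Fin.ext_iff, Fin.val_add, Fin.val_one', Fin.val_zero,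
    Nat.mod_eq_of_lt (by omega : 1 < n), Nat.mod_eq_of_lt (by omega)]
  omega

end Rim

lemma rimNext_rimNext_ne (hn : 3 ≤ n) {u : Fin (n + 1)} (hu : u ≠ Fin.last n) :
    rimNext n (rimNext n u) ≠ u := by
  have : NeZero n := ⟨by omega⟩
  obtain ⟨i, rfl⟩ := Fin.exists_castSucc_eq.2 hu
  rw [rimNext_castSucc, rimNext_castSucc, Ne, Fin.castSucc_inj]
  exact add_one_add_one_ne_self hn i

lemma rimNext_inj {u v : Fin (n + 1)} (hu : u ≠ Fin.last n) (hv : v ≠ Fin.last n) :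
    rimNext n u = rimNext n v ↔ u = v := by
  rcases Nat.eq_zero_or_pos n with rfl | hn
  · simp [rimNext]
  have : NeZero n := ⟨hn.ne'⟩
  obtain ⟨i, rfl⟩ := Fin.exists_castSucc_eq.2 hu
  obtain ⟨j, rfl⟩ := Fin.exists_castSucc_eq.2 hv
  simp only [rimNext_castSucc, Fin.castSucc_inj, add_left_inj]

lemma wheel_adj_iff (hn : 2 ≤ n) {u v : Fin (n + 1)} :
    (wheel n).Adj u v ↔ (u = Fin.last n ∧ v ≠ Fin.last n) ∨ (v = Fin.last n ∧ u ≠ Fin.last n) ∨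
      (u ≠ Fin.last n ∧ v ≠ Fin.last n ∧ (v = rimNext n u ∨ u = rimNext n v)) := by
  have : NeZero n := ⟨by omega⟩
  have hnext (a b : Fin (n + 1)) : b = rimNext n a ↔ ((a : ℕ) + 1) % n = b := by
    rw [Fin.ext_iff, rimNext, dif_pos (by omega), eq_comm]
  have hne (a : Fin (n + 1)) (ha : a ≠ Fin.last n) : rimNext n a ≠ a := by
    obtain ⟨i, rfl⟩ := Fin.exists_castSucc_eq.2 ha
    rw [rimNext_castSucc, Ne, Fin.castSucc_inj]
    exact add_one_ne_self hn i
  simp only [wheel, ← hnext]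
  constructor
  · rintro ⟨huv, h⟩
    by_cases hu : u = Fin.last n
    · exact Or.inl ⟨hu, fun hv => huv (hu.trans hv.symm)⟩
    by_cases hv : v = Fin.last n
    · exact Or.inr (Or.inl ⟨hv, hu⟩)
    exact Or.inr (Or.inr ⟨hu, hv, (h.resolve_left hu).resolve_left hv⟩)
  · rintro (⟨hu, hv⟩ | ⟨hv, hu⟩ | ⟨hu, hv, h⟩)
    · exact ⟨fun huv => hv (huv ▸ hu), Or.inl hu⟩
    · exact ⟨fun huv => hu (huv ▸ hv), Or.inr (Or.inl hv)⟩
    · refine ⟨?_, Or.inr (Or.inr h)⟩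
      rintro rfl
      rcases h with h | h <;> exact hne u hu h.symm

lemma wheel_adj_last (hn : 2 ≤ n) {u : Fin (n + 1)} (hu : u ≠ Fin.last n) :
    (wheel n).Adj (Fin.last n) u :=
  (wheel_adj_iff hn).2 (Or.inl ⟨rfl, hu⟩)

lemma wheel_adj_castSucc_add_one [NeZero n] (hn : 2 ≤ n) (i : Fin n) :
    (wheel n).Adj i.castSucc (i + 1).castSucc :=
  (wheel_adj_iff hn).2 <| Or.inr <| Or.inr
    ⟨Fin.castSucc_ne_last _, Fin.castSucc_ne_last _, Or.inl (rimNext_castSucc i).symm⟩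

lemma isWheelOrientation_cw (hn : 3 ≤ n) : isWheelOrientation n (cw n) := by
  refine ⟨fun u v => by rw [wheel_adj_iff (by omega)]; unfold cw; tauto, ?_⟩
  rintro u v ⟨⟨hu, hv⟩ | ⟨hu, hv, huv⟩, ⟨hv', -⟩ | ⟨-, hu', hvu⟩⟩
  · exact hv hv'
  · exact hu' hu
  · exact hv hv'
  · exact rimNext_rimNext_ne hn hu (huv ▸ hvu).symm

lemma atMostOneOut_cw : atMostOneOut n (cw n) := by
  rintro u hu v w (⟨hu', -⟩ | ⟨-, -, rfl⟩) (⟨hu'', -⟩ | ⟨-, -, rfl⟩)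
  all_goals first | rfl | contradiction

lemma isWheelOrientation_ccw (hn : 3 ≤ n) : isWheelOrientation n (ccw n) := by
  refine ⟨fun u v => by rw [wheel_adj_iff (by omega)]; unfold ccw; tauto, ?_⟩
  rintro u v ⟨⟨hu, hv⟩ | ⟨hu, hv, huv⟩, ⟨hv', -⟩ | ⟨-, hu', hvu⟩⟩
  · exact hv hv'
  · exact hu' hu
  · exact hv hv'
  · exact rimNext_rimNext_ne hn hu (hvu ▸ huv).symm

lemma atMostOneOut_ccw : atMostOneOut n (ccw n) := by
  rintro u hu v w (⟨hu', -⟩ | ⟨-, hv, huv⟩) (⟨hu'', -⟩ | ⟨-, hw, huw⟩)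
  all_goals try contradiction
  exact (rimNext_inj hv hw).1 (huv.symm.trans huw)

section Orientation

variable {r : Fin (n + 1) → Fin (n + 1) → Prop}

lemma isWheelOrientation.iff_of_imp {s : Fin (n + 1) → Fin (n + 1) → Prop}
    (hr : isWheelOrientation n r) (hs : isWheelOrientation n s) (h : ∀ u v, s u v → r u v)
    (u v : Fin (n + 1)) : r u v ↔ s u v := by
  refine ⟨fun huv => ?_, h u v⟩
  rcases (hs.1 u v).1 ((hr.1 u v).2 (Or.inl huv)) with hs' | hs'
  · exact hs'
  · exact absurd ⟨huv, h v u hs'⟩ (hr.2 u v)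

lemma atMostOneOut.rel_of_adj_of_ne (hout : atMostOneOut n r) (hr : isWheelOrientation n r)
    {u v w : Fin (n + 1)} (hu : u ≠ Fin.last n) (huv : r u v) (huw : (wheel n).Adj u w)
    (hwv : w ≠ v) : r w u :=
  ((hr.1 u w).1 huw).resolve_left fun h => hwv (hout u hu v w huv h).symm

variable (hn : 3 ≤ n) (hr : isWheelOrientation n r) (hout : atMostOneOut n r)
include hn hr hout

lemma rel_add_one_add_one_of_rel_add_one [NeZero n] {i : Fin n}
    (h : r (i + 1).castSucc i.castSucc) : r (i + 1 + 1).castSucc (i + 1).castSucc :=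
  hout.rel_of_adj_of_ne hr (Fin.castSucc_ne_last _) h (wheel_adj_castSucc_add_one (by omega) _)
    (by rw [Ne, Fin.castSucc_inj]; exact add_one_add_one_ne_self hn i)

open Fin.NatCast in
lemma rel_add_one_of_rel_add_one [NeZero n] {i : Fin n} (h : r (i + 1).castSucc i.castSucc)
    (j : Fin n) : r (j + 1).castSucc j.castSucc := by
  have hk (k : ℕ) : r (i + k + 1).castSucc (i + k).castSucc := by
    induction k with
    | zero => simpa using h
    | succ k ih =>
      rw [Nat.cast_succ, ← add_assoc]
      exact rel_add_one_add_one_of_rel_add_one hn hr hout ih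
  simpa using hk (j - i).val

lemma not_rel_last (u : Fin (n + 1)) : ¬ r u (Fin.last n) := by
  have : NeZero n := ⟨by omega⟩
  intro hu
  have hu' : u ≠ Fin.last n := by
    rintro rfl
    exact hr.2 _ _ ⟨hu, hu⟩
  obtain ⟨i, rfl⟩ := Fin.exists_castSucc_eq.2 hu'
  have hback : r (i + 1).castSucc i.castSucc :=
    hout.rel_of_adj_of_ne hr hu' hu (wheel_adj_castSucc_add_one (by omega) i)
      (Fin.castSucc_ne_last _)
  have hprev := rel_add_one_of_rel_add_one hn hr hout hback (i - 1)
  rw [sub_add_cancel] at hprev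
  exact Fin.castSucc_ne_last _ (hout _ hu' _ _ hprev hu)

lemma rel_last {u : Fin (n + 1)} (hu : u ≠ Fin.last n) : r (Fin.last n) u :=
  ((hr.1 _ _).1 (wheel_adj_last (by omega) hu)).resolve_right (not_rel_last hn hr hout u)

lemma rel_rimNext_or_rel_rimNext :
    (∀ u, u ≠ Fin.last n → r u (rimNext n u)) ∨ (∀ u, u ≠ Fin.last n → r (rimNext n u) u) := by
  have : NeZero n := ⟨by omega⟩
  simp only [forall_ne_last_rimNext_iff (p := r), forall_ne_last_rimNext_iff (p := fun u v => r v u)]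
  refine or_iff_not_imp_left.2 fun h => ?_
  obtain ⟨i, hi⟩ := not_forall.1 h
  exact rel_add_one_of_rel_add_one hn hr hout
    (((hr.1 _ _).1 (wheel_adj_castSucc_add_one (by omega) i)).resolve_left hi)

lemma eq_cw_or_eq_ccw : (∀ u v, r u v ↔ cw n u v) ∨ (∀ u v, r u v ↔ ccw n u v) := by
  refine (rel_rimNext_or_rel_rimNext hn hr hout).imp
    (fun hfwd => hr.iff_of_imp (isWheelOrientation_cw hn) ?_)
    (fun hbwd => hr.iff_of_imp (isWheelOrientation_ccw hn) ?_)
  · rintro u v (⟨rfl, hv⟩ | ⟨hu, -, rfl⟩)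
    · exact rel_last hn hr hout hv
    · exact hfwd u hu
  · rintro u v (⟨rfl, hv⟩ | ⟨-, hv, rfl⟩)
    · exact rel_last hn hr hout hv
    · exact hbwd v hv

end Orientation

lemma not_forall_cw_iff_ccw (hn : 3 ≤ n) : ¬ ∀ u v, cw n u v ↔ ccw n u v := by
  have : NeZero n := ⟨by omega⟩
  intro h
  have h0 : (0 : Fin n).castSucc ≠ Fin.last n := Fin.castSucc_ne_last _
  have hcw : cw n (0 : Fin n).castSucc (rimNext n (0 : Fin n).castSucc) :=
    Or.inr ⟨h0, by rw [rimNext_castSucc]; exact Fin.castSucc_ne_last _, rfl⟩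
  rcases (h _ _).1 hcw with ⟨hlast, -⟩ | ⟨-, -, hrim⟩
  · exact h0 hlast
  · exact rimNext_rimNext_ne hn h0 hrim.symm

end Paper

/-- For `n ≥ 3`, in any orientation of the wheel `W_n` in which
every vertex other than the hub has at most one outgoing edge, every spoke is
directed away from the hub and the rim is a directed cycle (one of the two
rotational directions). In particular, `W_n` has exactly two orientations with
this property. -/
theorem statement17 (n : ℕ) (hn : 3 ≤ n)
    (r : Fin (n + 1) → Fin (n + 1) → Prop)
    (hr : Paper.isWheelOrientation n r)
    (hout : Paper.atMostOneOut n r) :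
    ((∀ u, u ≠ Fin.last n → r (Fin.last n) u) ∧
      (∀ u, ¬ r u (Fin.last n)) ∧
      ((∀ i, i ≠ Fin.last n → r i (Paper.rimNext n i)) ∨
        (∀ i, i ≠ Fin.last n → r (Paper.rimNext n i) i))) ∧
    (Paper.isWheelOrientation n (Paper.cw n) ∧ Paper.atMostOneOut n (Paper.cw n)) ∧
    (Paper.isWheelOrientation n (Paper.ccw n) ∧ Paper.atMostOneOut n (Paper.ccw n)) ∧
    (¬ ∀ u v, Paper.cw n u v ↔ Paper.ccw n u v) ∧
    (∀ r' : Fin (n + 1) → Fin (n + 1) → Prop,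
      Paper.isWheelOrientation n r' → Paper.atMostOneOut n r' →
        (∀ u v, r' u v ↔ Paper.cw n u v) ∨ (∀ u v, r' u v ↔ Paper.ccw n u v)) :=
  ⟨⟨fun _ => Paper.rel_last hn hr hout, Paper.not_rel_last hn hr hout,
      Paper.rel_rimNext_or_rel_rimNext hn hr hout⟩,
    ⟨Paper.isWheelOrientation_cw hn, Paper.atMostOneOut_cw⟩,
    ⟨Paper.isWheelOrientation_ccw hn, Paper.atMostOneOut_ccw⟩,
    Paper.not_forall_cw_iff_ccw hn,
    fun _ hr' hout' => Paper.eq_cw_or_eq_ccw hn hr' hout'⟩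
end
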